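/- arXiv:1402.3465 — 2 statements merged into one kernel-verified Lean document; each statement's English description precedes it below -/
import Mathlib

section
/- Let K = ℚ_p and let m ≥ 1 be an integer. Let c ∈ K, and let ξ_m : (ℤ_p/p^m ℤ_p)^× → ℤ_p^× be any function choosing a representative of each unit class modulo p^m. Fix a unit u ∈ ℤ_p^×. Define φ : K → K by φ(x) = (x - c)·ξ_m(ac_m(x - c))^{-1}·u + c for x ≠ c, and φ(c) = c, where ac_m(z) denotes the class of z·p^{-ord(z)} modulo p^m. Then φ is 1-Lipschitz. -/
/-! Put `ψ z = z * (ξ (acm z))⁻¹ * u`, so that `φ x = ψ (x - c) + c`. Then `ψ` preserves norms,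
and since `ξ` picks representatives of the angular components, every nonzero value of `ψ` has
angular component `acm u`. Two elements of the same norm `r` have the same angular component iff
they are within `r * p ^ (-m)` of each other. So for `‖z‖ ≠ ‖w‖` the ultrametric inequality gives
`‖ψ z - ψ w‖ ≤ max ‖z‖ ‖w‖ = ‖z - w‖`; for `‖z‖ = ‖w‖` and equal angular components, `ψ z - ψ w`
is `z - w` times a unit; and otherwise `‖ψ z - ψ w‖ ≤ ‖z‖ * p ^ (-m) < ‖z - w‖`. -/

/-- The angular component modulo `p^m` of a nonzero `p`-adic number `z`:
the residue of `z * p^(-ord z)` in `ℤ_p / p^m`. -/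
noncomputable def acm (p : ℕ) [Fact p.Prime] (m : ℕ) (z : ℚ_[p]) : ZMod (p ^ m) :=
  if h : ‖z * (p : ℚ_[p]) ^ (-z.valuation)‖ ≤ 1 then
    PadicInt.toZModPow m (⟨z * (p : ℚ_[p]) ^ (-z.valuation), h⟩ : ℤ_[p])
  else 0

lemma IsUltrametricDist.norm_sub_le_of_norm_ne {E : Type*} [SeminormedAddGroup E]
    [IsUltrametricDist E] {a b a' b' : E} (ha : ‖a'‖ = ‖a‖) (hb : ‖b'‖ = ‖b‖)
    (hab : ‖a‖ ≠ ‖b‖) : ‖a' - b'‖ ≤ ‖a - b‖ := by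
  have hab' : ‖a‖ ≠ ‖-b‖ := by rwa [norm_neg]
  calc ‖a' - b'‖ ≤ max ‖a'‖ ‖-b'‖ := by
        rw [sub_eq_add_neg]; exact IsUltrametricDist.norm_add_le_max _ _
    _ = ‖a - b‖ := by
        rw [sub_eq_add_neg, IsUltrametricDist.norm_add_eq_max_of_norm_ne_norm hab', norm_neg,
          norm_neg, ha, hb]

section AngularComponent

variable {p : ℕ} [Fact p.Prime] {m : ℕ}

lemma Padic.norm_zpow_neg_valuation {z : ℚ_[p]} (hz : z ≠ 0) :
    ‖(p : ℚ_[p]) ^ (-z.valuation)‖ = ‖z‖⁻¹ := by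
  rw [norm_zpow, Padic.norm_p, Padic.norm_eq_zpow_neg_valuation hz, inv_zpow, zpow_neg]

lemma Padic.norm_mul_zpow_neg_valuation {z : ℚ_[p]} (hz : z ≠ 0) :
    ‖z * (p : ℚ_[p]) ^ (-z.valuation)‖ = 1 := by
  rw [norm_mul, Padic.norm_zpow_neg_valuation hz, mul_inv_cancel₀ (norm_ne_zero_iff.mpr hz)]

noncomputable def unitPart {z : ℚ_[p]} (hz : z ≠ 0) : ℤ_[p] :=
  ⟨z * (p : ℚ_[p]) ^ (-z.valuation), (Padic.norm_mul_zpow_neg_valuation hz).le⟩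

lemma coe_unitPart {z : ℚ_[p]} (hz : z ≠ 0) :
    (unitPart hz : ℚ_[p]) = z * (p : ℚ_[p]) ^ (-z.valuation) :=
  rfl

lemma isUnit_unitPart {z : ℚ_[p]} (hz : z ≠ 0) : IsUnit (unitPart hz) :=
  PadicInt.isUnit_iff.mpr (Padic.norm_mul_zpow_neg_valuation hz)

lemma unitPart_mul {z w : ℚ_[p]} (hz : z ≠ 0) (hw : w ≠ 0) :
    unitPart (mul_ne_zero hz hw) = unitPart hz * unitPart hw := by
  apply PadicInt.ext
  rw [PadicInt.coe_mul, coe_unitPart, coe_unitPart, coe_unitPart, Padic.valuation_mul hz hw,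
    neg_add, zpow_add₀ ((Nat.cast_ne_zero (R := ℚ_[p])).mpr (Fact.out : p.Prime).ne_zero)]
  ring

lemma unitPart_one : unitPart (one_ne_zero' ℚ_[p]) = 1 := by
  apply PadicInt.ext
  simp [coe_unitPart]

lemma acm_of_ne_zero {z : ℚ_[p]} (hz : z ≠ 0) :
    acm p m z = PadicInt.toZModPow m (unitPart hz) :=
  dif_pos _

lemma isUnit_acm {z : ℚ_[p]} (hz : z ≠ 0) : IsUnit (acm p m z) := by
  rw [acm_of_ne_zero hz]
  exact (isUnit_unitPart hz).map _

lemma acm_mul {z w : ℚ_[p]} (hz : z ≠ 0) (hw : w ≠ 0) :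
    acm p m (z * w) = acm p m z * acm p m w := by
  rw [acm_of_ne_zero (mul_ne_zero hz hw), acm_of_ne_zero hz, acm_of_ne_zero hw, unitPart_mul,
    map_mul]

lemma acm_one : acm p m 1 = 1 := by
  rw [acm_of_ne_zero one_ne_zero, unitPart_one, map_one]

lemma acm_mul_acm_inv {z : ℚ_[p]} (hz : z ≠ 0) : acm p m z * acm p m z⁻¹ = 1 := by
  rw [← acm_mul hz (inv_ne_zero hz), mul_inv_cancel₀ hz, acm_one]

lemma acm_eq_acm_iff_norm_sub_le {z w : ℚ_[p]} (hz : z ≠ 0) (hw : w ≠ 0) (hzw : ‖z‖ = ‖w‖) :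
    acm p m z = acm p m w ↔ ‖z - w‖ ≤ ‖z‖ * (p : ℝ) ^ (-(m : ℤ)) := by
  have hval : z.valuation = w.valuation := by
    rw [Padic.norm_eq_zpow_neg_valuation hz, Padic.norm_eq_zpow_neg_valuation hw,
      zpow_right_inj₀ (Nat.cast_pos.mpr (Fact.out : p.Prime).pos)
        (Nat.cast_ne_one.mpr (Fact.out : p.Prime).ne_one), neg_inj] at hzw
    exact hzw
  rw [acm_of_ne_zero hz, acm_of_ne_zero hw, ← sub_eq_zero, ← map_sub, ← RingHom.mem_ker,
    PadicInt.ker_toZModPow, ← PadicInt.norm_le_pow_iff_mem_span_pow, PadicInt.norm_def,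
    PadicInt.coe_sub, coe_unitPart, coe_unitPart, ← hval, ← sub_mul, norm_mul,
    Padic.norm_zpow_neg_valuation hz, ← div_eq_mul_inv, div_le_iff₀' (norm_pos_iff.mpr hz)]

end AngularComponent

section Rescaling

variable {p : ℕ} [Fact p.Prime] {m : ℕ}

noncomputable def acRescale (ξ : ZMod (p ^ m) → ℚ_[p]) (u z : ℚ_[p]) : ℚ_[p] :=
  z * (ξ (acm p m z))⁻¹ * u

variable {ξ : ZMod (p ^ m) → ℚ_[p]} {u : ℚ_[p]}

@[simp]
lemma acRescale_zero : acRescale ξ u 0 = 0 := by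
  simp [acRescale]

lemma norm_acRescale (hξnorm : ∀ a : ZMod (p ^ m), IsUnit a → ‖ξ a‖ = 1) (hu : ‖u‖ = 1)
    (z : ℚ_[p]) : ‖acRescale ξ u z‖ = ‖z‖ := by
  rcases eq_or_ne z 0 with rfl | hz
  · simp
  · rw [acRescale, norm_mul, norm_mul, norm_inv, hξnorm _ (isUnit_acm hz), hu, inv_one, mul_one,
      mul_one]

lemma acm_acRescale (hξnorm : ∀ a : ZMod (p ^ m), IsUnit a → ‖ξ a‖ = 1)
    (hξrep : ∀ a : ZMod (p ^ m), IsUnit a → acm p m (ξ a) = a) (hu : ‖u‖ = 1)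
    {z : ℚ_[p]} (hz : z ≠ 0) : acm p m (acRescale ξ u z) = acm p m u := by
  have hunit := isUnit_acm (m := m) hz
  have hξ : ξ (acm p m z) ≠ 0 := norm_ne_zero_iff.mp (by rw [hξnorm _ hunit]; exact one_ne_zero)
  have hu0 : u ≠ 0 := norm_ne_zero_iff.mp (by rw [hu]; exact one_ne_zero)
  have hinv := acm_mul_acm_inv (m := m) hξ
  rw [hξrep _ hunit] at hinv
  rw [acRescale, acm_mul (mul_ne_zero hz (inv_ne_zero hξ)) hu0, acm_mul hz (inv_ne_zero hξ), hinv,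
    one_mul]

lemma acRescale_sub_acRescale_of_acm_eq {z w : ℚ_[p]} (h : acm p m z = acm p m w) :
    acRescale ξ u z - acRescale ξ u w = (z - w) * (ξ (acm p m z))⁻¹ * u := by
  rw [acRescale, acRescale, h]
  ring

lemma norm_acRescale_sub_acRescale_le (hξnorm : ∀ a : ZMod (p ^ m), IsUnit a → ‖ξ a‖ = 1)
    (hξrep : ∀ a : ZMod (p ^ m), IsUnit a → acm p m (ξ a) = a) (hu : ‖u‖ = 1) (z w : ℚ_[p]) :
    ‖acRescale ξ u z - acRescale ξ u w‖ ≤ ‖z - w‖ := by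
  rcases ne_or_eq ‖z‖ ‖w‖ with hzw | hzw
  · exact IsUltrametricDist.norm_sub_le_of_norm_ne (norm_acRescale hξnorm hu z)
      (norm_acRescale hξnorm hu w) hzw
  rcases eq_or_ne z 0 with rfl | hz
  · rw [norm_zero, eq_comm, norm_eq_zero] at hzw
    simp [hzw]
  have hw : w ≠ 0 := norm_ne_zero_iff.mp (hzw ▸ norm_ne_zero_iff.mpr hz)
  by_cases hacm : acm p m z = acm p m w
  · rw [acRescale_sub_acRescale_of_acm_eq hacm, norm_mul, norm_mul, norm_inv,
      hξnorm _ (isUnit_acm hz), hu, inv_one, mul_one, mul_one]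
  have hψz := norm_acRescale hξnorm hu z
  have hψw := norm_acRescale hξnorm hu w
  have hψacm : acm p m (acRescale ξ u z) = acm p m (acRescale ξ u w) := by
    rw [acm_acRescale hξnorm hξrep hu hz, acm_acRescale hξnorm hξrep hu hw]
  calc ‖acRescale ξ u z - acRescale ξ u w‖ ≤ ‖acRescale ξ u z‖ * (p : ℝ) ^ (-(m : ℤ)) :=
        (acm_eq_acm_iff_norm_sub_le (norm_ne_zero_iff.mp (hψz ▸ norm_ne_zero_iff.mpr hz))
          (norm_ne_zero_iff.mp (hψw ▸ norm_ne_zero_iff.mpr hw)) (by rw [hψz, hψw, hzw])).mp hψacm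
    _ = ‖z‖ * (p : ℝ) ^ (-(m : ℤ)) := by rw [hψz]
    _ ≤ ‖z - w‖ := (not_le.mp (mt (acm_eq_acm_iff_norm_sub_le hz hw hzw).mpr hacm)).le

end Rescaling

theorem stmt9_general (p : ℕ) [Fact p.Prime] (m : ℕ)
    (c u : ℚ_[p]) (hu : ‖u‖ = 1)
    (ξ : ZMod (p ^ m) → ℚ_[p])
    (hξnorm : ∀ a : ZMod (p ^ m), IsUnit a → ‖ξ a‖ = 1)
    (hξrep : ∀ a : ZMod (p ^ m), IsUnit a → acm p m (ξ a) = a)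
    (φ : ℚ_[p] → ℚ_[p]) (hφc : φ c = c)
    (hφ : ∀ x : ℚ_[p], x ≠ c →
      φ x = (x - c) * (ξ (acm p m (x - c)))⁻¹ * u + c) :
    ∀ x y : ℚ_[p], ‖φ x - φ y‖ ≤ ‖x - y‖ := by
  have hφ_eq : ∀ x, φ x = acRescale ξ u (x - c) + c := by
    intro x
    rcases eq_or_ne x c with rfl | hx
    · rw [hφc, sub_self, acRescale_zero, zero_add]
    · exact hφ x hx
  intro x y
  simpa only [hφ_eq, add_sub_add_right_eq_sub, sub_sub_sub_cancel_right] using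
    norm_acRescale_sub_acRescale_le hξnorm hξrep hu (x - c) (y - c)

/-- Rescaling the angular component by a unit is a `1`-Lipschitz map: if
`ξ` chooses a norm-one representative of each unit class mod `p^m`, `u` is a unit,
and `φ x = (x - c) * (ξ (acm p m (x - c)))⁻¹ * u + c` for `x ≠ c`, `φ c = c`,
then `φ` is `1`-Lipschitz. -/
theorem stmt9 (p : ℕ) [Fact p.Prime] (m : ℕ) (hm : 1 ≤ m)
    (c u : ℚ_[p]) (hu : ‖u‖ = 1)
    (ξ : ZMod (p ^ m) → ℚ_[p])
    (hξnorm : ∀ a : ZMod (p ^ m), IsUnit a → ‖ξ a‖ = 1)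
    (hξrep : ∀ a : ZMod (p ^ m), IsUnit a → acm p m (ξ a) = a)
    (φ : ℚ_[p] → ℚ_[p]) (hφc : φ c = c)
    (hφ : ∀ x : ℚ_[p], x ≠ c →
      φ x = (x - c) * (ξ (acm p m (x - c)))⁻¹ * u + c) :
    ∀ x y : ℚ_[p], ‖φ x - φ y‖ ≤ ‖x - y‖ :=
  stmt9_general p m c u hu ξ hξnorm hξrep φ hφc hφ
end

section
/- Let K be a non-Archimedean valued field. Suppose X = ⋃_{i=1}^k X_i is a finite union of nonempty subsets of an ultrametric space, f : X → K is λ-Lipschitz, and each restriction f|_{X_i} extends to a Λ_i-Lipschitz function on the whole space with Λ_i ≥ λ. Assume all X_i are closed subsets of a proper (or compact) ambient space so distances to the X_i are attained. Then f extends to a (max_i Λ_i)-Lipschitz function on the whole space. -/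
open Metric Set

/-- Gluing Lipschitz extensions, general finite case: if `f` is `lam`-Lipschitz on
`⋃ i, S i`, distances to the closed sets `S i` are attained, and each restriction
`f|_{S i}` extends to a `Λ i`-Lipschitz function with `lam ≤ Λ i`, then `f` extends
to a `(⨆ i, Λ i)`-Lipschitz function on the whole space. -/
theorem stmt10 {M K : Type*} [MetricSpace M] [IsUltrametricDist M]
    [NormedField K] [IsUltrametricDist K]
    (k : ℕ) (hk : 0 < k) (S : Fin k → Set M)
    (hSne : ∀ i, (S i).Nonempty) (hScl : ∀ i, IsClosed (S i))
    (hreal : ∀ (x : M) (i : Fin k), ∃ a ∈ S i, dist x a = infDist x (S i))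
    (lam : ℝ) (Λ : Fin k → ℝ) (hΛ : ∀ i, lam ≤ Λ i)
    (f : M → K)
    (hf : ∀ x ∈ ⋃ i, S i, ∀ y ∈ ⋃ i, S i, ‖f x - f y‖ ≤ lam * dist x y)
    (hexti : ∀ i : Fin k, ∃ g : M → K,
      (∀ x y : M, ‖g x - g y‖ ≤ Λ i * dist x y) ∧ Set.EqOn g f (S i)) :
    ∃ g : M → K,
      (∀ x y : M, ‖g x - g y‖ ≤ (⨆ i, Λ i) * dist x y) ∧
      Set.EqOn g f (⋃ i, S i) := by
  classical
  haveI : Nonempty (Fin k) := ⟨⟨0, hk⟩⟩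
  choose g hg hgeq using hexti
  set Λs := ⨆ i, Λ i with hΛsdef
  have hΛle : ∀ i, Λ i ≤ Λs := fun i => le_ciSup ((Set.finite_range Λ).bddAbove) i
  have hlamle : lam ≤ Λs := (hΛ (Classical.arbitrary _)).trans (hΛle _)
  -- argmin selection with least-index tie-breaking
  have hmem : ∀ x : M,
      (Finset.univ.filter fun i : Fin k => ∀ j, infDist x (S i) ≤ infDist x (S j)).Nonempty := by
    intro x
    obtain ⟨i, -, hi⟩ := Finset.exists_min_image Finset.univ
      (fun i : Fin k => infDist x (S i)) ⟨Classical.arbitrary _, Finset.mem_univ _⟩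
    exact ⟨i, by simpa using fun j => hi j (Finset.mem_univ j)⟩
  set m : M → Fin k := fun x =>
    (Finset.univ.filter fun i : Fin k => ∀ j, infDist x (S i) ≤ infDist x (S j)).min' (hmem x)
    with hmdef
  have hm1 : ∀ (x : M) (j : Fin k), infDist x (S (m x)) ≤ infDist x (S j) := by
    intro x j
    have := Finset.min'_mem _ (hmem x)
    rw [Finset.mem_filter] at this
    exact this.2 j
  have hm2 : ∀ (x : M) (j : Fin k), (∀ l, infDist x (S j) ≤ infDist x (S l)) → m x ≤ j := by
    intro x j hj
    exact Finset.min'_le _ _ (by simp [hj])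
  -- key: if x is far from its nearest set, then m x = m y for nearby y
  have key : ∀ x y : M, dist x y < infDist x (S (m x)) → m x = m y := by
    intro x y ht
    obtain ⟨a, ha, hda⟩ := hreal x (m x)
    obtain ⟨b, hb, hdb⟩ := hreal y (m y)
    set r := infDist x (S (m x)) with hr
    set s := infDist y (S (m y)) with hs
    set t := dist x y with htd
    -- r ≤ infDist x (S (m y)) ≤ dist x b ≤ max t s, and t < r, so r ≤ s
    have h1 : r ≤ dist x b :=
      (hm1 x (m y)).trans (infDist_le_dist_of_mem hb)
    have h2 : dist x b ≤ max t s := by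
      calc dist x b ≤ max (dist x y) (dist y b) := IsUltrametricDist.dist_triangle_max x y b
        _ = max t s := by rw [hdb]
    have hrs : r ≤ s := by
      rcases le_max_iff.mp (h1.trans h2) with h | h
      · exact absurd h (not_le.mpr ht)
      · exact h
    -- infDist y (S (m x)) ≤ dist y a ≤ max t r = r ≤ s
    have h3 : infDist y (S (m x)) ≤ r := by
      calc infDist y (S (m x)) ≤ dist y a := infDist_le_dist_of_mem ha
        _ ≤ max (dist y x) (dist x a) := IsUltrametricDist.dist_triangle_max y x a
        _ ≤ r := by
            rw [hda, dist_comm y x]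
            exact max_le ht.le le_rfl
    have h4 : s ≤ infDist y (S (m x)) := hm1 y (m x)
    have hsr : s ≤ r := h4.trans h3
    have hreq : r = s := le_antisymm hrs hsr
    -- m x ≤ m y
    have hxy : m x ≤ m y := by
      apply hm2 x (m y)
      intro l
      have : infDist x (S (m y)) ≤ r := (infDist_le_dist_of_mem hb).trans
        (h2.trans (by rw [hreq]; exact max_le (ht.le.trans hrs) le_rfl))
      exact this.trans (hm1 x l)
    have hyx : m y ≤ m x := by
      apply hm2 y (m x)
      intro l
      have : infDist y (S (m x)) ≤ s := h3.trans hrs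
      exact this.trans (hm1 y l)
    exact le_antisymm hxy hyx
  refine ⟨fun x => g (m x) x, ?_, ?_⟩
  · intro x y
    by_cases hxy : m x = m y
    · calc ‖g (m x) x - g (m y) y‖ = ‖g (m x) x - g (m x) y‖ := by rw [hxy]
        _ ≤ Λ (m x) * dist x y := hg (m x) x y
        _ ≤ Λs * dist x y := mul_le_mul_of_nonneg_right (hΛle _) dist_nonneg
    · -- t > 0 since m x ≠ m y
      have ht0 : 0 < dist x y := by
        rcases eq_or_lt_of_le (dist_nonneg : (0:ℝ) ≤ dist x y) with h | h
        · exact absurd (congrArg m (dist_eq_zero.mp h.symm)) hxy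
        · exact h
      have hΛi0 : ∀ i, 0 ≤ Λ i := by
        intro i
        have h1 : (0:ℝ) ≤ ‖g i x - g i y‖ := norm_nonneg _
        have h2 := hg i x y
        nlinarith
      have hΛs0 : 0 ≤ Λs := (hΛi0 (Classical.arbitrary _)).trans (hΛle _)
      obtain ⟨a, ha, hda⟩ := hreal x (m x)
      obtain ⟨b, hb, hdb⟩ := hreal y (m y)
      have hr : dist x a ≤ dist x y := by
        rw [hda]
        by_contra h
        exact hxy (key x y (not_le.mp h))
      have hs : dist y b ≤ dist x y := by
        rw [hdb]
        by_contra h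
        exact hxy ((key y x (by rw [dist_comm]; exact not_le.mp h)).symm)
      have hab : dist a b ≤ dist x y := by
        calc dist a b ≤ max (dist a x) (max (dist x y) (dist y b)) :=
              (IsUltrametricDist.dist_triangle_max a x b).trans
                (max_le_max le_rfl (IsUltrametricDist.dist_triangle_max x y b))
          _ ≤ dist x y := by
              rw [dist_comm a x]
              exact max_le hr (max_le le_rfl hs)
      have hsplit : g (m x) x - g (m y) y
          = (g (m x) x - g (m x) a) + ((f a - f b) + (g (m y) b - g (m y) y)) := by
        rw [hgeq (m x) ha, hgeq (m y) hb]; ring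
      have b1 : ‖g (m x) x - g (m x) a‖ ≤ Λs * dist x y :=
        (hg (m x) x a).trans (mul_le_mul (hΛle _) hr dist_nonneg hΛs0)
      have b3 : ‖g (m y) b - g (m y) y‖ ≤ Λs * dist x y :=
        (hg (m y) b y).trans (mul_le_mul (hΛle _) (by rwa [dist_comm]) dist_nonneg hΛs0)
      have b2 : ‖f a - f b‖ ≤ Λs * dist x y := by
        have hfab := hf a (Set.mem_iUnion.mpr ⟨m x, ha⟩) b (Set.mem_iUnion.mpr ⟨m y, hb⟩)
        rcases le_or_gt 0 lam with hl | hl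
        · exact hfab.trans ((mul_le_mul hlamle hab dist_nonneg hΛs0))
        · have h0 : 0 ≤ lam * dist a b := (norm_nonneg _).trans hfab
          have : dist a b = 0 := by nlinarith [dist_nonneg (x := a) (y := b)]
          rw [this, mul_zero] at hfab
          exact hfab.trans (mul_nonneg hΛs0 dist_nonneg)
      calc ‖g (m x) x - g (m y) y‖
          ≤ max ‖g (m x) x - g (m x) a‖ ‖(f a - f b) + (g (m y) b - g (m y) y)‖ := by
            rw [hsplit]; exact IsUltrametricDist.norm_add_le_max _ _
        _ ≤ max ‖g (m x) x - g (m x) a‖ (max ‖f a - f b‖ ‖g (m y) b - g (m y) y‖) :=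
            max_le_max le_rfl (IsUltrametricDist.norm_add_le_max _ _)
        _ ≤ Λs * dist x y := max_le b1 (max_le b2 b3)
  · intro x hx
    obtain ⟨l, hl⟩ := Set.mem_iUnion.mp hx
    have h0 : infDist x (S (m x)) = 0 :=
      le_antisymm ((hm1 x l).trans_eq (infDist_zero_of_mem hl)) infDist_nonneg
    exact hgeq (m x) (((hScl (m x)).mem_iff_infDist_zero (hSne (m x))).mpr h0)
end
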